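/- Consider the two amalgamated products K₁ and K₂ of two copies of the generalized quaternion group Q₁₆ over Q₈ given by presentations K₁ = ⟨x, y, a, b | x⁴ = y², a⁴ = b², yxy⁻¹ = x⁻¹, bab⁻¹ = a⁻¹, x² = a², y = b⟩ and K₂ = ⟨x, y, a, b | x⁴ = y², a⁴ = b², yxy⁻¹ = x⁻¹, bab⁻¹ = a⁻¹, x² = b, y = a²b⟩. Then K₁ ≅ ℤ ⋊ Q₁₆ (with t = xa⁻¹ generating the normal ℤ, inverted by x and a and centralized by y and b), and K₁ is not isomorphic to K₂. -/

import Mathlib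

/-- Relations of `K₁ = ⟨x, y, a, b | x⁴ = y², a⁴ = b², yxy⁻¹ = x⁻¹, bab⁻¹ = a⁻¹,
x² = a², y = b⟩`, with generators `x = 0`, `y = 1`, `a = 2`, `b = 3`. -/
def k1Rels : Set (FreeGroup (Fin 4)) :=
  {FreeGroup.of 0 ^ 4 * (FreeGroup.of 1 ^ 2)⁻¹,
   FreeGroup.of 2 ^ 4 * (FreeGroup.of 3 ^ 2)⁻¹,
   FreeGroup.of 1 * FreeGroup.of 0 * (FreeGroup.of 1)⁻¹ * FreeGroup.of 0,
   FreeGroup.of 3 * FreeGroup.of 2 * (FreeGroup.of 3)⁻¹ * FreeGroup.of 2,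
   FreeGroup.of 0 ^ 2 * (FreeGroup.of 2 ^ 2)⁻¹,
   FreeGroup.of 1 * (FreeGroup.of 3)⁻¹}

/-- Relations of `K₂ = ⟨x, y, a, b | x⁴ = y², a⁴ = b², yxy⁻¹ = x⁻¹, bab⁻¹ = a⁻¹,
x² = b, y = a²b⟩`, with generators `x = 0`, `y = 1`, `a = 2`, `b = 3`. -/
def k2Rels : Set (FreeGroup (Fin 4)) :=
  {FreeGroup.of 0 ^ 4 * (FreeGroup.of 1 ^ 2)⁻¹,
   FreeGroup.of 2 ^ 4 * (FreeGroup.of 3 ^ 2)⁻¹,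
   FreeGroup.of 1 * FreeGroup.of 0 * (FreeGroup.of 1)⁻¹ * FreeGroup.of 0,
   FreeGroup.of 3 * FreeGroup.of 2 * (FreeGroup.of 3)⁻¹ * FreeGroup.of 2,
   FreeGroup.of 0 ^ 2 * (FreeGroup.of 3)⁻¹,
   FreeGroup.of 1 * (FreeGroup.of 2 ^ 2 * FreeGroup.of 3)⁻¹}

/-!
In `ℤ ⋊ Q₁₆`, where `a` inverts the generator `t` of `ℤ` and `b` fixes it, the elements
`x = t a`, `y = b`, `a`, `b` satisfy the relations of `K₁`. Conversely `ℤ ⋊ Q₁₆` maps back by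
`t ↦ x a⁻¹` together with the presentation `⟨a, b | b² = a⁴, b a b⁻¹ = a⁻¹⟩` of `Q₁₆`;
compatibility with the action only has to be checked on `a` and `b`, where it is `x² = a²`
and `y x y⁻¹ = x⁻¹`, `y = b`.

`K₁` and `K₂` are told apart by their homomorphisms to `ℤ/2`: for `K₁` the images of `x`, `a`
and `y = b` are free (8 homomorphisms), for `K₂` the relations `x² = b`, `y = a²b` force
`b = y = 1` (4 homomorphisms).
-/

open QuaternionGroup SemidirectProduct

theorem MulEquiv.inv_mul_self (M : Type*) [CommGroup M] :
    MulEquiv.inv M * MulEquiv.inv M = 1 := by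
  ext; simp

namespace QuaternionGroup

section generators

variable {n : ℕ} [NeZero n]

theorem exists_eq_xa_zero_pow_mul_a_one_pow (g : QuaternionGroup n) :
    ∃ e m : ℕ, g = xa 0 ^ e * a 1 ^ m := by
  rcases g with i | i
  · exact ⟨0, i.val, by simp [a_one_pow]⟩
  · exact ⟨1, i.val, by simp [a_one_pow, xa_mul_a]⟩

theorem closure_a_one_xa_zero :
    Subgroup.closure {a 1, xa 0} = (⊤ : Subgroup (QuaternionGroup n)) := by
  refine eq_top_iff.2 fun g _ => ?_
  obtain ⟨e, m, rfl⟩ := exists_eq_xa_zero_pow_mul_a_one_pow g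
  exact mul_mem (pow_mem (Subgroup.subset_closure (by simp)) e)
    (pow_mem (Subgroup.subset_closure (by simp)) m)

theorem hom_ext {G : Type*} [Group G] {φ ψ : QuaternionGroup n →* G}
    (ha : φ (a 1) = ψ (a 1)) (hxa : φ (xa 0) = ψ (xa 0)) : φ = ψ :=
  MonoidHom.eq_of_eqOn_dense closure_a_one_xa_zero (by rintro _ (rfl | rfl) <;> assumption)

end generators

section lift

variable {n : ℕ} {G : Type*} [Group G] {A B : G}

theorem conj_pow_eq_inv_pow (hBA : B * A * B⁻¹ = A⁻¹) (k : ℕ) :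
    B * A ^ k * B⁻¹ = (A ^ k)⁻¹ := by
  rw [← conj_pow, hBA, inv_pow]

theorem pow_two_mul_eq_one (hB : B ^ 2 = A ^ n) (hBA : B * A * B⁻¹ = A⁻¹) :
    A ^ (2 * n) = 1 := by
  -- conjugating `Aⁿ = B²` by `B` gives `A⁻ⁿ = B²`
  have h := conj_pow_eq_inv_pow hBA n
  rw [← hB, ← pow_succ', pow_succ, mul_inv_cancel_right, hB, eq_inv_iff_mul_eq_one] at h
  rwa [two_mul, pow_add]

theorem pow_mul_eq_mul_inv_pow (hB : B ^ 2 = A ^ n) (hBA : B * A * B⁻¹ = A⁻¹) (k : ℕ) :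
    A ^ k * B = B * (A ^ k)⁻¹ := by
  -- `B² = Aⁿ` commutes with `A`, so conjugation by `B⁻¹` inverts `A` as well
  have hc : Commute (B ^ 2) A := hB ▸ (Commute.refl A).pow_left n
  have h : SemiconjBy B A⁻¹ A := by
    rw [SemiconjBy, eq_comm, ← hBA,
      show B * (B * A * B⁻¹) = B ^ 2 * A * B⁻¹ by rw [sq]; group, hc.eq]
    group
  rw [← (h.pow_right k).eq, inv_pow]

theorem pow_val_add [NeZero n] (hA : A ^ (2 * n) = 1) (i j : ZMod (2 * n)) :
    A ^ (i + j).val = A ^ i.val * A ^ j.val := by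
  rw [ZMod.val_add, ← pow_eq_pow_mod _ hA, pow_add]

theorem pow_val_sub [NeZero n] (hA : A ^ (2 * n) = 1) (i j : ZMod (2 * n)) :
    A ^ (j - i).val = A ^ j.val * (A ^ i.val)⁻¹ := by
  rw [eq_mul_inv_iff_mul_eq, ← pow_val_add hA, sub_add_cancel]

variable [NeZero n] (hB : B ^ 2 = A ^ n) (hBA : B * A * B⁻¹ = A⁻¹)

def lift : QuaternionGroup n →* G where
  toFun
    | a i => A ^ i.val
    | xa i => B * A ^ i.val
  map_one' := show A ^ (0 : ZMod (2 * n)).val = 1 by simp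
  map_mul' g h := by
    have hA := pow_two_mul_eq_one hB hBA
    rcases g with i | i <;> rcases h with j | j <;>
      simp only [a_mul_a, a_mul_xa, xa_mul_a, xa_mul_xa]
    · exact pow_val_add hA i j
    · rw [pow_val_sub hA, ← mul_assoc (A ^ i.val), pow_mul_eq_mul_inv_pow hB hBA]
      group
    · rw [pow_val_add hA, mul_assoc]
    · rw [pow_val_sub hA, pow_val_add hA, ZMod.val_natCast,
        Nat.mod_eq_of_lt (by have := NeZero.pos n; omega), ← hB, ← mul_assoc, mul_assoc B,
        pow_mul_eq_mul_inv_pow hB hBA, sq]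
      group

@[simp] theorem lift_a_one : lift hB hBA (a 1) = A := by
  show A ^ (1 : ZMod (2 * n)).val = A
  rw [ZMod.val_one_eq_one_mod, Nat.mod_eq_of_lt (by have := NeZero.pos n; omega), pow_one]

@[simp] theorem lift_xa_zero : lift hB hBA (xa 0) = B :=
  show B * A ^ (0 : ZMod (2 * n)).val = B by simp

end lift

section signAction

variable {n : ℕ}

theorem a_one_pow_two_mul_mem_closure (q : ℕ) :
    (a 1 : QuaternionGroup n) ^ (2 * q) ∈ Subgroup.closure {a 2, xa 0} := by
  rw [pow_mul, a_one_pow]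
  exact pow_mem (Subgroup.subset_closure (by simp)) q

variable [NeZero n]

theorem mem_closure_a_two_xa_zero_or_mul_a_one_mem (g : QuaternionGroup n) :
    g ∈ Subgroup.closure {a 2, xa 0} ∨ g * a 1 ∈ Subgroup.closure {a 2, xa 0} := by
  obtain ⟨e, m, rfl⟩ := exists_eq_xa_zero_pow_mul_a_one_pow g
  have hxa : xa 0 ^ e ∈ Subgroup.closure ({a 2, xa 0} : Set (QuaternionGroup n)) :=
    pow_mem (Subgroup.subset_closure (by simp)) e
  rcases Nat.even_or_odd' m with ⟨q, rfl | rfl⟩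
  · exact .inl (mul_mem hxa (a_one_pow_two_mul_mem_closure q))
  · refine .inr ?_
    rw [mul_assoc, ← pow_succ, show 2 * q + 1 + 1 = 2 * (q + 1) by ring]
    exact mul_mem hxa (a_one_pow_two_mul_mem_closure (q + 1))

def signAction (hn : Even n) : QuaternionGroup n →* MulAut (Multiplicative ℤ) :=
  lift (A := MulEquiv.inv _) (B := 1)
    (by
      obtain ⟨k, rfl⟩ := hn
      rw [one_pow, ← two_mul, pow_mul, sq, MulEquiv.inv_mul_self, one_pow])
    (by ext; simp)

variable (hn : Even n)

theorem closure_a_two_xa_zero_le_ker_signAction :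
    Subgroup.closure {a 2, xa 0} ≤ (signAction hn).ker := by
  rw [Subgroup.closure_le]
  rintro _ (rfl | rfl)
  · rw [SetLike.mem_coe, MonoidHom.mem_ker, show (a 2 : QuaternionGroup n) = a 1 * a 1 by
      simp [a_mul_a, one_add_one_eq_two], map_mul, signAction, lift_a_one, MulEquiv.inv_mul_self]
  · simp [signAction]

theorem signAction_of_not_mem {g : QuaternionGroup n}
    (hg : g ∉ Subgroup.closure {a 2, xa 0}) : signAction hn g = MulEquiv.inv _ := by
  have := closure_a_two_xa_zero_le_ker_signAction hn
    ((mem_closure_a_two_xa_zero_or_mul_a_one_mem g).resolve_left hg)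
  rw [MonoidHom.mem_ker, map_mul, mul_eq_one_iff_eq_inv] at this
  rw [this, signAction, lift_a_one]
  exact inv_eq_of_mul_eq_one_left (MulEquiv.inv_mul_self _)

end signAction

end QuaternionGroup

theorem SemidirectProduct.comp_eq_conj_comp_of_closure_eq_top {N G H : Type*} [Group N]
    [Group G] [Group H] {φ : G →* MulAut N} (fn : N →* H) (fg : G →* H) {S : Set G}
    (hS : Subgroup.closure S = ⊤)
    (h : ∀ g ∈ S, fn.comp (φ g).toMonoidHom = (MulAut.conj (fg g)).toMonoidHom.comp fn)
    (g : G) : fn.comp (φ g).toMonoidHom = (MulAut.conj (fg g)).toMonoidHom.comp fn := by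
  suffices ∀ n, fn (φ g n) = fg g * fn n * (fg g)⁻¹ from MonoidHom.ext this
  refine Subgroup.closure_induction (p := fun g _ => ∀ n, fn (φ g n) = fg g * fn n * (fg g)⁻¹)
    (fun g hg n => DFunLike.congr_fun (h g hg) n) (fun n => by simp)
    (fun g₁ g₂ _ _ h₁ h₂ n => ?_) (fun g _ hg n => ?_) (hS ▸ Subgroup.mem_top g)
  · rw [map_mul, MulAut.mul_apply, h₁, h₂, map_mul]
    group
  · have := hg (φ g⁻¹ n)
    rw [← MulAut.mul_apply, ← map_mul, mul_inv_cancel, map_one, MulAut.one_apply] at this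
    rw [map_inv fg, this]
    group

def PresentedGroup.homEquiv {α G : Type*} [Group G] (rels : Set (FreeGroup α)) :
    (PresentedGroup rels →* G) ≃ {f : α → G // ∀ r ∈ rels, FreeGroup.lift f r = 1} where
  toFun φ := ⟨fun i => φ (.of i), fun r hr => by
    rw [show FreeGroup.lift (fun i => φ (.of i)) = φ.comp (mk rels) from
      FreeGroup.ext_hom _ _ fun _ => by simp [PresentedGroup.of], MonoidHom.comp_apply,
      one_of_mem hr, map_one]⟩
  invFun f := toGroup f.2
  left_inv φ := PresentedGroup.ext fun _ => toGroup.of _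
  right_inv f := Subtype.ext <| funext fun _ => toGroup.of _

namespace K1

abbrev action : QuaternionGroup 4 →* MulAut (Multiplicative ℤ) := signAction (by decide)

def x : PresentedGroup k1Rels := .of 0
def y : PresentedGroup k1Rels := .of 1
def a : PresentedGroup k1Rels := .of 2
def b : PresentedGroup k1Rels := .of 3

theorem a_pow_four : a ^ 4 = b ^ 2 := by
  have := PresentedGroup.mk_eq_mk_of_mul_inv_mem (rels := k1Rels) (x := FreeGroup.of 2 ^ 4)
    (y := FreeGroup.of 3 ^ 2) (by simp [k1Rels])
  rwa [map_pow, map_pow] at this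

theorem y_conj_x : y * x * y⁻¹ = x⁻¹ := by
  have := PresentedGroup.mk_eq_mk_of_mul_inv_mem (rels := k1Rels)
    (x := FreeGroup.of 1 * FreeGroup.of 0 * (FreeGroup.of 1)⁻¹) (y := (FreeGroup.of 0)⁻¹)
    (by simp [k1Rels])
  rwa [map_mul, map_mul, map_inv, map_inv] at this

theorem b_conj_a : b * a * b⁻¹ = a⁻¹ := by
  have := PresentedGroup.mk_eq_mk_of_mul_inv_mem (rels := k1Rels)
    (x := FreeGroup.of 3 * FreeGroup.of 2 * (FreeGroup.of 3)⁻¹) (y := (FreeGroup.of 2)⁻¹)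
    (by simp [k1Rels])
  rwa [map_mul, map_mul, map_inv, map_inv] at this

theorem x_sq : x ^ 2 = a ^ 2 := by
  have := PresentedGroup.mk_eq_mk_of_mul_inv_mem (rels := k1Rels) (x := FreeGroup.of 0 ^ 2)
    (y := FreeGroup.of 2 ^ 2) (by simp [k1Rels])
  rwa [map_pow, map_pow] at this

theorem y_eq_b : y = b :=
  PresentedGroup.mk_eq_mk_of_mul_inv_mem (by simp [k1Rels])

def t : PresentedGroup k1Rels := x * a⁻¹

theorem a_conj_t : a * t * a⁻¹ = t⁻¹ := by
  calc a * t * a⁻¹ = a * x * (a ^ 2)⁻¹ := by rw [t]; group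
    _ = t⁻¹ := by rw [← x_sq, t]; group

theorem b_conj_t : b * t * b⁻¹ = t := by
  calc b * t * b⁻¹ = (b * x * b⁻¹) * (b * a * b⁻¹)⁻¹ := by rw [t]; group
    _ = x⁻¹ * x ^ 2 * a⁻¹ := by rw [← y_eq_b, y_conj_x, y_eq_b, b_conj_a, x_sq]; group
    _ = t := by rw [t]; group

def generatorImages : Fin 4 → Multiplicative ℤ ⋊[action] QuaternionGroup 4 :=
  ![inl (.ofAdd 1) * inr (.a 1), inr (.xa 0), inr (.a 1), inr (.xa 0)]

theorem generatorImages_rels : ∀ r ∈ k1Rels, FreeGroup.lift generatorImages r = 1 := by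
  simp only [k1Rels, Set.mem_insert_iff, Set.mem_singleton_iff, forall_eq_or_imp, forall_eq,
    map_mul, map_pow, map_inv, FreeGroup.lift_apply_of]
  decide

def toSemidirect : PresentedGroup k1Rels →* Multiplicative ℤ ⋊[action] QuaternionGroup 4 :=
  PresentedGroup.toGroup generatorImages_rels

def ofQuaternion : QuaternionGroup 4 →* PresentedGroup k1Rels :=
  QuaternionGroup.lift a_pow_four.symm b_conj_a

def ofSemidirect : Multiplicative ℤ ⋊[action] QuaternionGroup 4 →* PresentedGroup k1Rels :=
  SemidirectProduct.lift (zpowersHom _ t) ofQuaternion <|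
    comp_eq_conj_comp_of_closure_eq_top _ _ closure_a_one_xa_zero <| by
      rintro _ (rfl | rfl) <;> refine MonoidHom.ext_mint ?_
      · simp [ofQuaternion, signAction, a_conj_t]
      · simp [ofQuaternion, signAction, b_conj_t]

theorem toSemidirect_t : toSemidirect t = inl (.ofAdd 1) := by
  simp only [t, toSemidirect, map_mul, map_inv]
  decide

theorem toSemidirect_comp_ofSemidirect : toSemidirect.comp ofSemidirect = MonoidHom.id _ := by
  refine SemidirectProduct.hom_ext (MonoidHom.ext_mint ?_) (QuaternionGroup.hom_ext ?_ ?_)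
  · simpa [ofSemidirect] using toSemidirect_t
  all_goals simp [ofSemidirect, ofQuaternion, toSemidirect, a, b, generatorImages]

theorem ofSemidirect_comp_toSemidirect : ofSemidirect.comp toSemidirect = MonoidHom.id _ := by
  refine PresentedGroup.ext fun i => ?_
  fin_cases i <;> simp [ofSemidirect, ofQuaternion, toSemidirect, generatorImages]
  exacts [inv_mul_cancel_right x a, y_eq_b.symm, rfl, rfl]

def mulEquivSemidirect :
    PresentedGroup k1Rels ≃* Multiplicative ℤ ⋊[action] QuaternionGroup 4 :=
  MonoidHom.toMulEquiv _ _ ofSemidirect_comp_toSemidirect toSemidirect_comp_ofSemidirect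

end K1

theorem card_hom_k1_zmod_two :
    Nat.card (PresentedGroup k1Rels →* Multiplicative (ZMod 2)) = 8 := by
  rw [Nat.card_congr (PresentedGroup.homEquiv k1Rels)]
  simp only [k1Rels, Set.mem_insert_iff, Set.mem_singleton_iff, forall_eq_or_imp, forall_eq,
    map_mul, map_pow, map_inv, FreeGroup.lift_apply_of]
  rw [Nat.card_eq_fintype_card]
  decide

theorem card_hom_k2_zmod_two :
    Nat.card (PresentedGroup k2Rels →* Multiplicative (ZMod 2)) = 4 := by
  rw [Nat.card_congr (PresentedGroup.homEquiv k2Rels)]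
  simp only [k2Rels, Set.mem_insert_iff, Set.mem_singleton_iff, forall_eq_or_imp, forall_eq,
    map_mul, map_pow, map_inv, FreeGroup.lift_apply_of]
  rw [Nat.card_eq_fintype_card]
  decide

theorem not_nonempty_k1_mulEquiv_k2 :
    ¬ Nonempty (PresentedGroup k1Rels ≃* PresentedGroup k2Rels) := fun ⟨e⟩ => by
  have := Nat.card_congr (e.monoidHomCongrLeftEquiv (N := Multiplicative (ZMod 2)))
  rw [card_hom_k1_zmod_two, card_hom_k2_zmod_two] at this
  exact absurd this (by decide)

/-- `K₁ ≅ ℤ ⋊ Q₁₆`, where `t = x a⁻¹` generates the normal `ℤ` factor and conjugation by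
an element of `Q₁₆` (= `QuaternionGroup 4`, with `a = a 1`, `b = xa 0`) fixes `t` when it
lies in the subgroup `⟨a², b⟩ ≅ Q₈` and inverts `t` otherwise; and `K₁` is not isomorphic
to `K₂`. -/
theorem stmt_17 :
    (∃ ψ : QuaternionGroup 4 →* MulAut (Multiplicative ℤ),
      (∀ g : QuaternionGroup 4,
        (g ∈ Subgroup.closure
            ({QuaternionGroup.a 2, QuaternionGroup.xa 0} : Set (QuaternionGroup 4)) →
          ∀ t, ψ g t = t) ∧
        (g ∉ Subgroup.closure
            ({QuaternionGroup.a 2, QuaternionGroup.xa 0} : Set (QuaternionGroup 4)) →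
          ∀ t, ψ g t = t⁻¹)) ∧
      ∃ e : PresentedGroup k1Rels ≃* Multiplicative ℤ ⋊[ψ] QuaternionGroup 4,
        e (PresentedGroup.of 0 * (PresentedGroup.of 2)⁻¹) =
          SemidirectProduct.inl (Multiplicative.ofAdd 1)) ∧
    ¬ Nonempty (PresentedGroup k1Rels ≃* PresentedGroup k2Rels) := by
  refine ⟨⟨K1.action, fun g => ⟨fun hg t => ?_, fun hg t => ?_⟩, K1.mulEquivSemidirect,
    K1.toSemidirect_t⟩, not_nonempty_k1_mulEquiv_k2⟩
  · rw [closure_a_two_xa_zero_le_ker_signAction _ hg]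
    rfl
  · rw [signAction_of_not_mem _ hg]
    rfl
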